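/- arXiv:2211.10089 — 6 statements merged into one kernel-verified Lean document; each statement's English description precedes it below -/
import Mathlib

section
/- Let f : [a,b] → ℝ be strictly quasiconcave. Then there exists a unique m ∈ [a,b] such that either (f is strictly increasing on [a,m] and strictly decreasing on (m,b]) or (f is strictly increasing on [a,m) and strictly decreasing on [m,b]). -/
open Set

/-! A strictly quasiconcave `f` satisfies the three-point condition `min (f x) (f z) < f y` for
`x < y < z`. Call `x` a strict record if `f x` exceeds every earlier value of `f` on `[a, x)`.
The three-point condition makes `f` strictly decreasing from any non-record onwards, so the records
form an initial segment `[a, m]` or `[a, m)` of `[a, b]`, on which `f` is strictly increasing,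
while `f` is strictly decreasing on the rest. Two distinct peaks `m < m'` would force `f` to be both
strictly increasing and strictly decreasing on `(m, m')`. -/

theorem min_lt_apply_between {s : Set ℝ} {f : ℝ → ℝ}
    (hf : ∀ x ∈ s, ∀ x' ∈ s, x < x' → ∀ l ∈ Ioo (0:ℝ) 1,
      min (f x) (f x') < f (l * x + (1 - l) * x'))
    {x y z : ℝ} (hx : x ∈ s) (hz : z ∈ s) (hxy : x < y) (hyz : y < z) :
    min (f x) (f z) < f y := by
  have hxz : 0 < z - x := by linarith
  have hl : (z - y) / (z - x) ∈ Ioo (0:ℝ) 1 :=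
    ⟨div_pos (by linarith) hxz, (div_lt_one hxz).2 (by linarith)⟩
  have hy : (z - y) / (z - x) * x + (1 - (z - y) / (z - x)) * z = y := by
    field_simp
    ring
  simpa only [hy] using hf x hx z hz (hxy.trans hyz) _ hl

theorem exists_eq_Icc_or_eq_Ico {α : Type*} [ConditionallyCompleteLinearOrder α]
    {s : Set α} {a b : α} (hs : s ⊆ Icc a b) (hne : s.Nonempty)
    (hdown : ∀ y ∈ s, Icc a y ⊆ s) :
    ∃ m ∈ Icc a b, s = Icc a m ∨ s = Ico a m := by
  have hbdd : BddAbove s := ⟨b, fun x hx => (hs hx).2⟩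
  have hsub : s ⊆ Icc a (sSup s) := fun x hx => ⟨(hs hx).1, le_csSup hbdd hx⟩
  have hIco : Ico a (sSup s) ⊆ s := fun x hx => by
    obtain ⟨y, hy, hxy⟩ := exists_lt_of_lt_csSup hne hx.2
    exact hdown y hy ⟨hx.1, hxy.le⟩
  obtain ⟨x, hx⟩ := hne
  refine ⟨sSup s, ⟨(hsub hx).1.trans (hsub hx).2, csSup_le ⟨x, hx⟩ fun y hy => (hs hy).2⟩, ?_⟩
  by_cases hm : sSup s ∈ s
  · left
    refine hsub.antisymm ?_
    rw [← Ico_insert_right ((hsub hx).1.trans (hsub hx).2)]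
    exact insert_subset hm hIco
  · right
    refine Subset.antisymm (fun y hy => ⟨(hsub hy).1, ?_⟩) hIco
    exact (hsub hy).2.lt_of_ne fun h => hm (h ▸ hy)

section StrictRecords

variable {α β : Type*} [LinearOrder α] [LinearOrder β] {f : α → β} {a b x y : α}

def strictRecords (f : α → β) (a b : α) : Set α :=
  {x ∈ Icc a b | ∀ w ∈ Ico a x, f w < f x}

theorem left_mem_strictRecords (hab : a ≤ b) : a ∈ strictRecords f a b :=
  ⟨left_mem_Icc.2 hab, fun _ hw => absurd hw.2 (not_lt.2 hw.1)⟩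

theorem strictMonoOn_strictRecords : StrictMonoOn f (strictRecords f a b) :=
  fun x hx _ hy hxy => hy.2 x ⟨hx.1.1, hxy⟩

theorem lt_of_notMem_strictRecords
    (hf : ∀ x ∈ Icc a b, ∀ z ∈ Icc a b, ∀ y, x < y → y < z → min (f x) (f z) < f y)
    (hx : x ∈ Icc a b) (hxr : x ∉ strictRecords f a b) (hy : y ∈ Icc a b) (hxy : x < y) :
    f y < f x := by
  obtain ⟨w, hw, hfw⟩ : ∃ w ∈ Ico a x, f x ≤ f w := by
    simpa [strictRecords, hx.1, hx.2, and_assoc] using hxr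
  have hmin := hf w ⟨hw.1, hw.2.le.trans hx.2⟩ y hy x hw.2 hxy
  exact (min_lt_iff.1 hmin).resolve_left (not_lt.2 hfw)

theorem strictAntiOn_diff_strictRecords
    (hf : ∀ x ∈ Icc a b, ∀ z ∈ Icc a b, ∀ y, x < y → y < z → min (f x) (f z) < f y) :
    StrictAntiOn f (Icc a b \ strictRecords f a b) :=
  fun _ hx _ hy hxy => lt_of_notMem_strictRecords hf hx.1 hx.2 hy.1 hxy

theorem Icc_subset_strictRecords
    (hf : ∀ x ∈ Icc a b, ∀ z ∈ Icc a b, ∀ y, x < y → y < z → min (f x) (f z) < f y)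
    (hy : y ∈ strictRecords f a b) : Icc a y ⊆ strictRecords f a b := by
  intro x hx
  rcases hx.2.eq_or_lt with rfl | hxy
  · exact hy
  by_contra hxr
  have hxI : x ∈ Icc a b := ⟨hx.1, hxy.le.trans hy.1.2⟩
  exact (lt_of_notMem_strictRecords hf hxI hxr hy.1 hxy).asymm (hy.2 x ⟨hx.1, hxy⟩)

end StrictRecords

section IsStrictPeakOn

variable {α β : Type*} [LinearOrder α] [Preorder β] {f : α → β} {a b m m' : α}

def IsStrictPeakOn (f : α → β) (a b m : α) : Prop :=
  (StrictMonoOn f (Icc a m) ∧ StrictAntiOn f (Ioc m b)) ∨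
    (StrictMonoOn f (Ico a m) ∧ StrictAntiOn f (Icc m b))

theorem isStrictPeakOn_of_eq_Icc_or_eq_Ico {s : Set α} (hmono : StrictMonoOn f s)
    (hanti : StrictAntiOn f (Icc a b \ s)) (ha : a ≤ m) (hs : s = Icc a m ∨ s = Ico a m) :
    IsStrictPeakOn f a b m := by
  rcases hs with rfl | rfl
  · exact .inl ⟨hmono, hanti.mono fun x hx => ⟨⟨ha.trans hx.1.le, hx.2⟩, fun h => hx.1.not_ge h.2⟩⟩
  · exact .inr ⟨hmono, hanti.mono fun x hx => ⟨⟨ha.trans hx.1, hx.2⟩, fun h => hx.1.not_gt h.2⟩⟩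

theorem IsStrictPeakOn.strictMonoOn_Ico (h : IsStrictPeakOn f a b m) :
    StrictMonoOn f (Ico a m) :=
  h.elim (fun h => h.1.mono Ico_subset_Icc_self) And.left

theorem IsStrictPeakOn.strictAntiOn_Ioc (h : IsStrictPeakOn f a b m) :
    StrictAntiOn f (Ioc m b) :=
  h.elim And.right fun h => h.2.mono Ioc_subset_Icc_self

theorem IsStrictPeakOn.le [DenselyOrdered α] (h : IsStrictPeakOn f a b m)
    (h' : IsStrictPeakOn f a b m') (ha : a ≤ m) (hb : m' ≤ b) : m' ≤ m := by
  by_contra! hlt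
  obtain ⟨x, hmx, hxm'⟩ := exists_between hlt
  obtain ⟨y, hxy, hym'⟩ := exists_between hxm'
  have hup := h'.strictMonoOn_Ico ⟨ha.trans hmx.le, hxm'⟩ ⟨ha.trans (hmx.trans hxy).le, hym'⟩ hxy
  have hdown := h.strictAntiOn_Ioc ⟨hmx, (hxm'.trans_le hb).le⟩
    ⟨hmx.trans hxy, (hym'.trans_le hb).le⟩ hxy
  exact hup.asymm hdown

end IsStrictPeakOn

/-- A strictly quasiconcave function on `[a,b]` admits a *unique* point `m`
splitting it into a strictly increasing and a strictly decreasing part. -/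
theorem strict_quasiconcave_exists_unique_peak (a b : ℝ) (hab : a ≤ b) (f : ℝ → ℝ)
    (hqc : ∀ x ∈ Icc a b, ∀ x' ∈ Icc a b, x < x' → ∀ l ∈ Ioo (0:ℝ) 1,
      min (f x) (f x') < f (l * x + (1 - l) * x')) :
    ∃! m : ℝ, m ∈ Icc a b ∧
      ((StrictMonoOn f (Icc a m) ∧ StrictAntiOn f (Ioc m b)) ∨
       (StrictMonoOn f (Ico a m) ∧ StrictAntiOn f (Icc m b))) := by
  have hf : ∀ x ∈ Icc a b, ∀ z ∈ Icc a b, ∀ y, x < y → y < z → min (f x) (f z) < f y :=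
    fun _ hx _ hz _ => min_lt_apply_between hqc hx hz
  obtain ⟨m, hm, hr⟩ := exists_eq_Icc_or_eq_Ico (sep_subset _ _)
    ⟨a, left_mem_strictRecords hab⟩ fun y hy => Icc_subset_strictRecords hf hy
  have hpeak : IsStrictPeakOn f a b m := isStrictPeakOn_of_eq_Icc_or_eq_Ico
    strictMonoOn_strictRecords (strictAntiOn_diff_strictRecords hf) hm.1 hr
  refine ⟨m, ⟨hm, hpeak⟩, fun m' ⟨hm', hpeak'⟩ => ?_⟩
  exact le_antisymm (hpeak.le hpeak' hm.1 hm'.2) (IsStrictPeakOn.le hpeak' hpeak hm'.1 hm.2)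
end

section
/- Let f, g : [a,b] → ℝ be strictly quasiconcave with peak points m_f, m_g, and suppose h = min{f,g} satisfies h(x) = g(x) for x < x₀, h(x₀) = f(x₀) = g(x₀), and h(x) = f(x) for x > x₀, for some x₀ ∈ [a,b]. Then the peak point of h equals m_f if x₀ < m_f, equals x₀ if m_f ≤ x₀ ≤ m_g, and equals m_g if m_g < x₀. -/
open Set

/-- `m` is the peak point of `f` on `[a,b]`: `f` is strictly increasing before `m` and
strictly decreasing after `m` (one of the two boundary conventions). -/
def IsPeakPt (f : ℝ → ℝ) (a b m : ℝ) : Prop :=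
  m ∈ Set.Icc a b ∧
    ((StrictMonoOn f (Set.Icc a m) ∧ StrictAntiOn f (Set.Ioc m b)) ∨
     (StrictMonoOn f (Set.Ico a m) ∧ StrictAntiOn f (Set.Icc m b)))

/-!
Proof idea: a peak point is determined by the monotonicity of the function around it: if `φ`
is strictly increasing on `(s, t)` then its peak lies at or after `t`, and if it is strictly
decreasing on `(s, t)` the peak lies at or before `s`. The minimum `h` coincides with `g` on
`[a, x₀)` and with `f` on `(x₀, b]`, so on each side of `x₀` it inherits the monotonicity
pattern of `g`, resp. `f`; in each of the three cases this pins the peak of `h` from both sides.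
-/

theorem StrictMonoOn.not_strictAntiOn {α β : Type*} [LinearOrder α] [Preorder β] {φ : α → β}
    {s : Set α} (hmono : StrictMonoOn φ s) (hs : s.Nontrivial) : ¬ StrictAntiOn φ s := by
  intro hanti
  obtain ⟨x, hx, y, hy, hxy⟩ := hs
  rcases hxy.lt_or_gt with hlt | hlt
  · exact (hmono hx hy hlt).asymm (hanti hx hy hlt)
  · exact (hmono hy hx hlt).asymm (hanti hy hx hlt)

namespace IsPeakPt

variable {φ : ℝ → ℝ} {a b m s t : ℝ}

theorem strictMonoOn (hm : IsPeakPt φ a b m) : StrictMonoOn φ (Ico a m) := by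
  rcases hm.2 with ⟨hmono, -⟩ | ⟨hmono, -⟩
  · exact hmono.mono Ico_subset_Icc_self
  · exact hmono

theorem strictAntiOn (hm : IsPeakPt φ a b m) : StrictAntiOn φ (Ioc m b) := by
  rcases hm.2 with ⟨-, hanti⟩ | ⟨-, hanti⟩
  · exact hanti
  · exact hanti.mono Ioc_subset_Icc_self

theorem le_of_strictMonoOn_Ioo (hm : IsPeakPt φ a b m) (hst : s < t) (htb : t ≤ b)
    (hφ : StrictMonoOn φ (Ioo s t)) : t ≤ m := by
  by_contra! hmt
  have hsub : Ioo (max s m) t ⊆ Ioo s t ∩ Ioc m b := fun x hx =>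
    ⟨⟨(le_max_left s m).trans_lt hx.1, hx.2⟩,
      ⟨(le_max_right s m).trans_lt hx.1, hx.2.le.trans htb⟩⟩
  exact (hφ.mono (hsub.trans inter_subset_left)).not_strictAntiOn
    (Ioo_infinite (max_lt hst hmt)).nontrivial
    (hm.strictAntiOn.mono (hsub.trans inter_subset_right))

theorem le_of_strictAntiOn_Ioo (hm : IsPeakPt φ a b m) (hst : s < t) (has : a ≤ s)
    (hφ : StrictAntiOn φ (Ioo s t)) : m ≤ s := by
  by_contra! hsm
  have hsub : Ioo s (min t m) ⊆ Ioo s t ∩ Ico a m := fun x hx =>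
    ⟨⟨hx.1, hx.2.trans_le (min_le_left t m)⟩,
      ⟨has.trans hx.1.le, hx.2.trans_le (min_le_right t m)⟩⟩
  exact (hm.strictMonoOn.mono (hsub.trans inter_subset_right)).not_strictAntiOn
    (Ioo_infinite (lt_min hst hsm)).nontrivial
    (hφ.mono (hsub.trans inter_subset_left))

theorem le_of_strictMonoOn_Ioo_left (hm : IsPeakPt φ a b m) (htb : t ≤ b)
    (hφ : StrictMonoOn φ (Ioo a t)) : t ≤ m := by
  by_contra! hmt
  exact hmt.not_ge (hm.le_of_strictMonoOn_Ioo (hm.1.1.trans_lt hmt) htb hφ)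

theorem le_of_strictAntiOn_Ioo_right (hm : IsPeakPt φ a b m) (has : a ≤ s)
    (hφ : StrictAntiOn φ (Ioo s b)) : m ≤ s := by
  by_contra! hsm
  exact hsm.not_ge (hm.le_of_strictAntiOn_Ioo (hsm.trans_le hm.1.2) has hφ)

end IsPeakPt

theorem peak_of_min_crossing_general (a b : ℝ) (f g : ℝ → ℝ)
    (mf mg mh x₀ : ℝ) (hx₀ : x₀ ∈ Icc a b)
    (hmf : IsPeakPt f a b mf) (hmg : IsPeakPt g a b mg)
    (hmh : IsPeakPt (fun x => min (f x) (g x)) a b mh)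
    (hbefore : ∀ x ∈ Icc a b, x < x₀ → min (f x) (g x) = g x)
    (hafter : ∀ x ∈ Icc a b, x₀ < x → min (f x) (g x) = f x) :
    (x₀ < mf → mh = mf) ∧
    (mf ≤ x₀ → x₀ ≤ mg → mh = x₀) ∧
    (mg < x₀ → mh = mg) := by
  set h : ℝ → ℝ := fun x => min (f x) (g x)
  have hg_eq {s t : ℝ} (has : a ≤ s) (htx₀ : t ≤ x₀) : EqOn g h (Ioo s t) := fun x hx =>
    (hbefore x ⟨has.trans hx.1.le, (hx.2.trans_le htx₀).le.trans hx₀.2⟩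
      (hx.2.trans_le htx₀)).symm
  have hf_eq {s t : ℝ} (hx₀s : x₀ ≤ s) (htb : t ≤ b) : EqOn f h (Ioo s t) := fun x hx =>
    (hafter x ⟨hx₀.1.trans (hx₀s.trans hx.1.le), hx.2.le.trans htb⟩
      (hx₀s.trans_lt hx.1)).symm
  refine ⟨fun hx₀f => le_antisymm ?_ ?_, fun hfx₀ hx₀g => le_antisymm ?_ ?_,
    fun hgx₀ => le_antisymm ?_ ?_⟩
  · exact hmh.le_of_strictAntiOn_Ioo_right hmf.1.1
      ((hmf.strictAntiOn.mono Ioo_subset_Ioc_self).congr (hf_eq hx₀f.le le_rfl))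
  · exact hmh.le_of_strictMonoOn_Ioo hx₀f hmf.1.2
      ((hmf.strictMonoOn.mono (Ioo_subset_Ico_self.trans (Ico_subset_Ico_left hx₀.1))).congr
        (hf_eq le_rfl hmf.1.2))
  · exact hmh.le_of_strictAntiOn_Ioo_right hx₀.1
      ((hmf.strictAntiOn.mono (Ioo_subset_Ioc_self.trans (Ioc_subset_Ioc_left hfx₀))).congr
        (hf_eq le_rfl le_rfl))
  · exact hmh.le_of_strictMonoOn_Ioo_left hx₀.2
      ((hmg.strictMonoOn.mono (Ioo_subset_Ico_self.trans (Ico_subset_Ico_right hx₀g))).congr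
        (hg_eq le_rfl le_rfl))
  · exact hmh.le_of_strictAntiOn_Ioo hgx₀ hmg.1.1
      ((hmg.strictAntiOn.mono (Ioo_subset_Ioc_self.trans (Ioc_subset_Ioc_right hx₀.2))).congr
        (hg_eq hmg.1.1 le_rfl))
  · exact hmh.le_of_strictMonoOn_Ioo_left hmg.1.2
      ((hmg.strictMonoOn.mono Ioo_subset_Ico_self).congr (hg_eq le_rfl hgx₀.le))

/-- If `h = min{f,g}` equals `g` before `x₀`, `f = g` at `x₀` and `f` after `x₀`,
then the peak of `h` is `m_f` if `x₀ < m_f`, `x₀` if `m_f ≤ x₀ ≤ m_g`, and `m_g` if `m_g < x₀`. -/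
theorem peak_of_min_crossing (a b : ℝ) (hab : a ≤ b) (f g : ℝ → ℝ)
    (hf : ∀ x ∈ Icc a b, ∀ x' ∈ Icc a b, x < x' → ∀ l ∈ Ioo (0:ℝ) 1,
      min (f x) (f x') < f (l * x + (1 - l) * x'))
    (hg : ∀ x ∈ Icc a b, ∀ x' ∈ Icc a b, x < x' → ∀ l ∈ Ioo (0:ℝ) 1,
      min (g x) (g x') < g (l * x + (1 - l) * x'))
    (mf mg mh x₀ : ℝ) (hx₀ : x₀ ∈ Icc a b)
    (hmf : IsPeakPt f a b mf) (hmg : IsPeakPt g a b mg)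
    (hmh : IsPeakPt (fun x => min (f x) (g x)) a b mh)
    (hbefore : ∀ x ∈ Icc a b, x < x₀ → min (f x) (g x) = g x)
    (hat : f x₀ = g x₀)
    (hafter : ∀ x ∈ Icc a b, x₀ < x → min (f x) (g x) = f x) :
    (x₀ < mf → mh = mf) ∧
    (mf ≤ x₀ → x₀ ≤ mg → mh = x₀) ∧
    (mg < x₀ → mh = mg) :=
  peak_of_min_crossing_general a b f g mf mg mh x₀ hx₀ hmf hmg hmh hbefore hafter
end

section
/- It is impossible for the peak points of strictly quasiconcave functions f, g : [a,b] → ℝ to satisfy m_g < x₀ < m_f when h = min{f,g} equals g on [a, x₀), equals f on (x₀, b], and f(x₀) = g(x₀). -/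
open Set

namespace IsPeakPt

variable {f : ℝ → ℝ} {a b m : ℝ}

theorem strictMonoOn_Ico (h : IsPeakPt f a b m) : StrictMonoOn f (Ico a m) := by
  rcases h.2 with ⟨hmono, -⟩ | ⟨hmono, -⟩
  · exact hmono.mono Ico_subset_Icc_self
  · exact hmono

theorem strictAntiOn_Ioc (h : IsPeakPt f a b m) : StrictAntiOn f (Ioc m b) := by
  rcases h.2 with ⟨-, hanti⟩ | ⟨-, hanti⟩
  · exact hanti
  · exact hanti.mono Ioc_subset_Icc_self

end IsPeakPt

/-- Just to the right of `x₀`, `f` is still rising and `g` already falling, so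
`f x₀ < f x ≤ g x < g x₀`, contradicting `f x₀ = g x₀`. -/
theorem peak_order_impossible_general (a b : ℝ) (f g : ℝ → ℝ)
    (mf mg x₀ : ℝ) (hx₀ : x₀ ∈ Icc a b)
    (hmf : IsPeakPt f a b mf) (hmg : IsPeakPt g a b mg)
    (hat : f x₀ = g x₀)
    (hafter : ∀ x ∈ Icc a b, x₀ < x → min (f x) (g x) = f x) :
    ¬ (mg < x₀ ∧ x₀ < mf) := by
  rintro ⟨hmg_lt, hlt_mf⟩
  obtain ⟨x, hx₀x, hxmf⟩ := exists_between hlt_mf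
  have hx : x ∈ Icc a b := ⟨hx₀.1.trans hx₀x.le, hxmf.le.trans hmf.1.2⟩
  have hf_rise : f x₀ < f x := hmf.strictMonoOn_Ico ⟨hx₀.1, hlt_mf⟩ ⟨hx.1, hxmf⟩ hx₀x
  have hg_fall : g x < g x₀ := hmg.strictAntiOn_Ioc ⟨hmg_lt, hx₀.2⟩ ⟨hmg_lt.trans hx₀x, hx.2⟩ hx₀x
  have hfg : f x ≤ g x := min_eq_left_iff.mp (hafter x hx hx₀x)
  linarith

/-- The configuration `m_g < x₀ < m_f` is impossible when `h = min{f,g}` equals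
`g` on `[a,x₀)`, equals `f` on `(x₀,b]` and `f x₀ = g x₀`. -/
theorem peak_order_impossible (a b : ℝ) (hab : a ≤ b) (f g : ℝ → ℝ)
    (hf : ∀ x ∈ Icc a b, ∀ x' ∈ Icc a b, x < x' → ∀ l ∈ Ioo (0:ℝ) 1,
      min (f x) (f x') < f (l * x + (1 - l) * x'))
    (hg : ∀ x ∈ Icc a b, ∀ x' ∈ Icc a b, x < x' → ∀ l ∈ Ioo (0:ℝ) 1,
      min (g x) (g x') < g (l * x + (1 - l) * x'))
    (mf mg x₀ : ℝ) (hx₀ : x₀ ∈ Icc a b)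
    (hmf : IsPeakPt f a b mf) (hmg : IsPeakPt g a b mg)
    (hbefore : ∀ x ∈ Icc a b, x < x₀ → min (f x) (g x) = g x)
    (hat : f x₀ = g x₀)
    (hafter : ∀ x ∈ Icc a b, x₀ < x → min (f x) (g x) = f x) :
    ¬ (mg < x₀ ∧ x₀ < mf) :=
  peak_order_impossible_general a b f g mf mg x₀ hx₀ hmf hmg hat hafter
end

section
/- Let F be a CDF on [x_l, x_h] with strictly positive differentiable density f satisfying the standard hazard rate conditions: x + F(x)/f(x) is increasing and x - (1-F(x))/f(x) is increasing. Let u be twice continuously differentiable, concave, strictly increasing with u' > 0. Then for each x_D, the map p ↦ u(x_D - p)·F(2p) + u(p)·(1 - F(2p)) is strictly quasiconcave on {p : 2p ∈ [x_l, x_h]}. -/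
open Set

open Filter Topology in
private lemma aux_deriv_nonneg {φ : ℝ → ℝ} {s : Set ℝ} {x b d : ℝ} (hm : MonotoneOn φ s)
    (hd : HasDerivAt φ d x) (hx : x ∈ s) (hsub : Ioc x b ⊆ s) (hxb : x < b) : 0 ≤ d := by
  have hs := hasDerivAt_iff_tendsto_slope.mp hd
  have hs' : Tendsto (slope φ x) (𝓝[>] x) (𝓝 d) :=
    hs.mono_left (nhdsWithin_mono x (fun y hy => ne_of_gt hy))
  refine ge_of_tendsto hs' ?_
  filter_upwards [Ioc_mem_nhdsGT_of_mem ⟨le_refl x, hxb⟩] with y hy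
  have h1 : φ x ≤ φ y := hm hx (hsub hy) hy.1.le
  have h2 : 0 < y - x := sub_pos.mpr hy.1
  rw [slope_def_field, div_eq_inv_mul]
  exact mul_nonneg (by positivity) (by linarith)

/-- If the CDF `F` (with strictly positive differentiable density `f`) satisfies
the standard hazard rate conditions and `u` is C², concave, strictly increasing with `u' > 0`,
then the divider's payoff `p ↦ u(x_D - p)F(2p) + u(p)(1 - F(2p))` is strictly quasiconcave on
`{p | 2p ∈ [x_l, x_h]}`. -/
theorem shrc_implies_strict_quasiconcavity (xl xh : ℝ) (hx : xl < xh) (F f u : ℝ → ℝ)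
    (hfpos : ∀ x ∈ Icc xl xh, 0 < f x)
    (hfdiff : DifferentiableOn ℝ f (Icc xl xh))
    (hF : ∀ x ∈ Icc xl xh, HasDerivAt F (f x) x)
    (hF0 : F xl = 0) (hF1 : F xh = 1) (hFmono : MonotoneOn F (Icc xl xh))
    (shrc1 : MonotoneOn (fun x => x + F x / f x) (Icc xl xh))
    (shrc2 : MonotoneOn (fun x => x - (1 - F x) / f x) (Icc xl xh))
    (hu : ContDiff ℝ 2 u) (huconc : ConcaveOn ℝ univ u) (hum : StrictMono u)
    (hu' : ∀ x, 0 < deriv u x)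
    (xD : ℝ) (hxD : xD ∈ Icc xl xh) :
    ∀ p, 2 * p ∈ Icc xl xh → ∀ q, 2 * q ∈ Icc xl xh → p < q → ∀ l ∈ Ioo (0:ℝ) 1,
      min (u (xD - p) * F (2 * p) + u p * (1 - F (2 * p)))
          (u (xD - q) * F (2 * q) + u q * (1 - F (2 * q))) <
        u (xD - (l * p + (1 - l) * q)) * F (2 * (l * p + (1 - l) * q)) +
          u (l * p + (1 - l) * q) * (1 - F (2 * (l * p + (1 - l) * q))) := by
  -- basic facts about u
  have hud : Differentiable ℝ u := hu.differentiable two_ne_zero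
  have hu2 : ContDiff ℝ ((1:ℕ) + 1) u := by exact_mod_cast hu
  have hu'cd : ContDiff ℝ 1 (deriv u) := by exact_mod_cast (contDiff_succ_iff_deriv.mp hu2).2.2
  have hu'd : Differentiable ℝ (deriv u) := hu'cd.differentiable one_ne_zero
  have hu'c : Continuous (deriv u) := hu'cd.continuous
  -- second derivative of u is nonpositive
  have hu'' : ∀ x : ℝ, deriv (deriv u) x ≤ 0 := by
    intro x
    have hanti : AntitoneOn (deriv u) (univ : Set ℝ) := by
      have := huconc.antitoneOn_deriv (fun y _ => hud y)
      simpa using this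
    have hmono : MonotoneOn (fun y => -(deriv u y)) (univ : Set ℝ) :=
      fun a _ c _ hac => neg_le_neg (hanti (mem_univ a) (mem_univ c) hac)
    have hd : HasDerivAt (fun y => -(deriv u y)) (-(deriv (deriv u) x)) x :=
      ((hu'd x).hasDerivAt).neg
    have := aux_deriv_nonneg hmono hd (mem_univ x) (fun y _ => mem_univ y) (lt_add_one x)
    linarith
  -- auxiliary function h : π' = 2 f(2t) h(t)
  set h : ℝ → ℝ := fun t => (u (xD - t) - u t) +
    (deriv u t * (1 - F (2 * t)) - deriv u (xD - t) * F (2 * t)) / (2 * f (2 * t)) with hhdef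
  set I : Set ℝ := Icc (xl / 2) (xh / 2) with hIdef
  have hmemI : ∀ t : ℝ, t ∈ I → 2 * t ∈ Icc xl xh := by
    intro t ht
    exact ⟨by linarith [ht.1], by linarith [ht.2]⟩
  -- derivative of the payoff function
  have hπ : ∀ t ∈ I, HasDerivAt (fun s => u (xD - s) * F (2 * s) + u s * (1 - F (2 * s)))
      (2 * f (2 * t) * h t) t := by
    intro t ht
    have h2t : 2 * t ∈ Icc xl xh := hmemI t ht
    have hfv : 0 < f (2 * t) := hfpos _ h2t
    have h21 : HasDerivAt (fun y : ℝ => 2 * y) 2 t := by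
      simpa using (hasDerivAt_id t).const_mul 2
    have dF : HasDerivAt (fun s : ℝ => F (2 * s)) (f (2 * t) * 2) t := by
      simpa [Function.comp_def] using (hF _ h2t).comp t h21
    have hin : HasDerivAt (fun y : ℝ => xD - y) (-1) t := by
      simpa using (hasDerivAt_id t).const_sub xD
    have du1 : HasDerivAt (fun s : ℝ => u (xD - s)) (deriv u (xD - t) * (-1)) t := by
      simpa [Function.comp_def] using ((hud (xD - t)).hasDerivAt).comp t hin
    have du2 : HasDerivAt u (deriv u t) t := (hud t).hasDerivAt
    have dπ := (du1.mul dF).add (du2.mul ((hasDerivAt_const t (1:ℝ)).sub dF))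
    refine dπ.congr_deriv ?_
    rw [hhdef]
    simp only [Pi.sub_apply]
    have hfne : f (2 * t) ≠ 0 := ne_of_gt hfv
    field_simp
    ring_nf
    have hfne' : f (t * 2) ≠ 0 := by rw [mul_comm]; exact hfne
    field_simp
    ring
  -- h is strictly antitone on I
  have hanti : StrictAntiOn h I := by
    have hconv : Convex ℝ I := convex_Icc _ _
    have hFc : ContinuousOn F (Icc xl xh) := fun x hx => (hF x hx).continuousAt.continuousWithinAt
    have hmap : MapsTo (fun t : ℝ => 2 * t) I (Icc xl xh) := fun t ht => hmemI t ht
    have hFcont : ContinuousOn (fun t : ℝ => F (2 * t)) I :=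
      hFc.comp ((continuous_const.mul continuous_id).continuousOn) hmap
    have hfcont : ContinuousOn (fun t : ℝ => f (2 * t)) I :=
      hfdiff.continuousOn.comp ((continuous_const.mul continuous_id).continuousOn) hmap
    have hcont : ContinuousOn h I := by
      refine ContinuousOn.add ?_ (ContinuousOn.div ?_ ?_ ?_)
      · exact ((hu.continuous.comp (continuous_const.sub continuous_id)).continuousOn).sub
          hu.continuous.continuousOn
      · exact (hu'c.continuousOn.mul (continuousOn_const.sub hFcont)).sub
          (((hu'c.comp (continuous_const.sub continuous_id)).continuousOn).mul hFcont)
      · exact continuousOn_const.mul hfcont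
      · intro t ht
        have := hfpos _ (hmemI t ht)
        positivity
    refine strictAntiOn_of_deriv_neg hconv hcont ?_
    rw [hIdef, interior_Icc]
    intro t ht
    have h2t : 2 * t ∈ Ioo xl xh := ⟨by linarith [ht.1], by linarith [ht.2]⟩
    have h2tI : 2 * t ∈ Icc xl xh := ⟨h2t.1.le, h2t.2.le⟩
    have htI : t ∈ I := ⟨ht.1.le, ht.2.le⟩
    have hfv : 0 < f (2 * t) := hfpos _ h2tI
    have ha : 0 < deriv u t := hu' t
    have hb : 0 < deriv u (xD - t) := hu' (xD - t)
    have hα : deriv (deriv u) t ≤ 0 := hu'' t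
    have hβ : deriv (deriv u) (xD - t) ≤ 0 := hu'' (xD - t)
    have hFv0 : 0 ≤ F (2 * t) := by
      have := hFmono (left_mem_Icc.mpr hx.le) h2tI h2t.1.le
      rw [hF0] at this; exact this
    have hFv1 : F (2 * t) ≤ 1 := by
      have := hFmono h2tI (right_mem_Icc.mpr hx.le) h2t.2.le
      rw [hF1] at this; exact this
    have hfat : HasDerivAt f (deriv f (2 * t)) (2 * t) :=
      (hfdiff.differentiableAt (Icc_mem_nhds h2t.1 h2t.2)).hasDerivAt
    set a := deriv u t
    set b := deriv u (xD - t)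
    set α := deriv (deriv u) t
    set β := deriv (deriv u) (xD - t)
    set Fv := F (2 * t)
    set fv := f (2 * t)
    set fd := deriv f (2 * t)
    -- hazard rate bounds
    have hY : Fv * fd ≤ 2 * fv ^ 2 := by
      have dφ : HasDerivAt (fun x => x + F x / f x)
          (1 + (fv * fv - Fv * fd) / fv ^ 2) (2 * t) :=
        (hasDerivAt_id _).add ((hF _ h2tI).div hfat (ne_of_gt hfv))
      have h0 : 0 ≤ 1 + (fv * fv - Fv * fd) / fv ^ 2 :=
        aux_deriv_nonneg shrc1 dφ h2tI
          (fun y hy => ⟨le_trans h2t.1.le hy.1.le, hy.2⟩) h2t.2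
      have hfv2 : 0 < fv ^ 2 := by positivity
      have h1 : -1 ≤ (fv * fv - Fv * fd) / fv ^ 2 := by linarith
      rw [le_div_iff₀ hfv2] at h1
      nlinarith
    have hX : -(2 * fv ^ 2) ≤ (1 - Fv) * fd := by
      have dφ : HasDerivAt (fun x => x - (1 - F x) / f x)
          (1 - ((0 - fv) * fv - (1 - Fv) * fd) / fv ^ 2) (2 * t) :=
        (hasDerivAt_id _).sub
          (((hasDerivAt_const _ (1:ℝ)).sub (hF _ h2tI)).div hfat (ne_of_gt hfv))
      have h0 : 0 ≤ 1 - ((0 - fv) * fv - (1 - Fv) * fd) / fv ^ 2 :=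
        aux_deriv_nonneg shrc2 dφ h2tI
          (fun y hy => ⟨le_trans h2t.1.le hy.1.le, hy.2⟩) h2t.2
      have hfv2 : 0 < fv ^ 2 := by positivity
      have h1 : ((0 - fv) * fv - (1 - Fv) * fd) / fv ^ 2 ≤ 1 := by linarith
      rw [div_le_iff₀ hfv2] at h1
      nlinarith
    -- compute deriv h t
    have h21 : HasDerivAt (fun y : ℝ => 2 * y) 2 t := by
      simpa using (hasDerivAt_id t).const_mul 2
    have dF : HasDerivAt (fun s : ℝ => F (2 * s)) (fv * 2) t := by
      simpa [Function.comp_def] using (hF _ h2tI).comp t h21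
    have hin : HasDerivAt (fun y : ℝ => xD - y) (-1) t := by
      simpa using (hasDerivAt_id t).const_sub xD
    have du1 : HasDerivAt (fun s : ℝ => u (xD - s)) (b * (-1)) t := by
      simpa [Function.comp_def] using ((hud (xD - t)).hasDerivAt).comp t hin
    have du2 : HasDerivAt u a t := (hud t).hasDerivAt
    have du1' : HasDerivAt (fun s : ℝ => deriv u (xD - s)) (β * (-1)) t := by
      simpa [Function.comp_def] using ((hu'd (xD - t)).hasDerivAt).comp t hin
    have du2' : HasDerivAt (deriv u) α t := (hu'd t).hasDerivAt
    have dD : HasDerivAt (fun s : ℝ => 2 * f (2 * s)) (2 * (fd * 2)) t := by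
      have : HasDerivAt (fun s : ℝ => f (2 * s)) (fd * 2) t := by
        simpa [Function.comp_def] using hfat.comp t h21
      simpa using this.const_mul 2
    have dN : HasDerivAt (fun s : ℝ => deriv u s * (1 - F (2 * s)) - deriv u (xD - s) * F (2 * s))
        (α * (1 - Fv) + a * (0 - fv * 2) - (β * (-1) * Fv + b * (fv * 2))) t :=
      (du2'.mul ((hasDerivAt_const t (1:ℝ)).sub dF)).sub (du1'.mul dF)
    have hD0 : (2 : ℝ) * fv ≠ 0 := by positivity
    have dh : HasDerivAt h ((b * (-1) - a) +
        ((α * (1 - Fv) + a * (0 - fv * 2) - (β * (-1) * Fv + b * (fv * 2))) * (2 * fv) -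
          (a * (1 - Fv) - b * Fv) * (2 * (fd * 2))) / (2 * fv) ^ 2) t := by
      rw [hhdef]
      exact (du1.sub du2).add (dN.div dD hD0)
    rw [dh.deriv]
    -- the core inequality
    have hC : (0:ℝ) < (2 * fv) ^ 2 := by positivity
    rw [add_div' _ _ _ (ne_of_gt hC)]
    refine div_neg_of_neg_of_pos ?_ hC
    have e1 : 2 * fv * (α * (1 - Fv)) ≤ 0 :=
      mul_nonpos_of_nonneg_of_nonpos (by positivity)
        (mul_nonpos_of_nonpos_of_nonneg hα (by linarith))
    have e2 : 2 * fv * (β * Fv) ≤ 0 :=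
      mul_nonpos_of_nonneg_of_nonpos (by positivity)
        (mul_nonpos_of_nonpos_of_nonneg hβ hFv0)
    rcases lt_or_ge (Fv * fd) (2 * fv ^ 2) with hc | hc
    · have e3 : b * (Fv * fd) < b * (2 * fv ^ 2) := mul_lt_mul_of_pos_left hc hb
      have e4 : a * (-(2 * fv ^ 2)) ≤ a * ((1 - Fv) * fd) := mul_le_mul_of_nonneg_left hX ha.le
      nlinarith [e1, e2, e3, e4]
    · have hfd : 0 < fd := by nlinarith
      have e3' : (0:ℝ) ≤ (1 - Fv) * fd := mul_nonneg (by linarith) hfd.le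
      have e4 : a * (-(2 * fv ^ 2)) < a * ((1 - Fv) * fd) := by nlinarith
      have e3 : b * (Fv * fd) ≤ b * (2 * fv ^ 2) := mul_le_mul_of_nonneg_left hY hb.le
      nlinarith [e1, e2, e3, e4]
  -- main argument
  intro p hp q hq hpq l hl
  have hpI : p ∈ I := ⟨by linarith [hp.1], by linarith [hp.2]⟩
  have hqI : q ∈ I := ⟨by linarith [hq.1], by linarith [hq.2]⟩
  set m := l * p + (1 - l) * q with hmdef
  have hpm : p < m := by nlinarith [hl.1, hl.2]
  have hmq : m < q := by nlinarith [hl.1, hl.2]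
  have hmI : m ∈ I := ⟨le_trans hpI.1 hpm.le, le_trans hmq.le hqI.2⟩
  rcases le_or_gt 0 (h m) with hm0 | hm0
  · have hsub : Icc p m ⊆ I := Icc_subset_Icc hpI.1 hmI.2
    have hmono : StrictMonoOn (fun s => u (xD - s) * F (2 * s) + u s * (1 - F (2 * s)))
        (Icc p m) := by
      refine strictMonoOn_of_deriv_pos (convex_Icc _ _)
        (fun t ht => (hπ t (hsub ht)).continuousAt.continuousWithinAt) ?_
      rw [interior_Icc]
      intro t ht
      have htI : t ∈ I := hsub ⟨ht.1.le, ht.2.le⟩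
      rw [(hπ t htI).deriv]
      have hht : 0 < h t := lt_of_le_of_lt hm0 (hanti htI hmI ht.2)
      have hfv := hfpos _ (hmemI t htI)
      exact mul_pos (by positivity) hht
    exact lt_of_le_of_lt (min_le_left _ _) (hmono ⟨le_refl p, hpm.le⟩ ⟨hpm.le, le_refl m⟩ hpm)
  · have hsub : Icc m q ⊆ I := Icc_subset_Icc hmI.1 hqI.2
    have hmono : StrictAntiOn (fun s => u (xD - s) * F (2 * s) + u s * (1 - F (2 * s)))
        (Icc m q) := by
      refine strictAntiOn_of_deriv_neg (convex_Icc _ _)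
        (fun t ht => (hπ t (hsub ht)).continuousAt.continuousWithinAt) ?_
      rw [interior_Icc]
      intro t ht
      have htI : t ∈ I := hsub ⟨ht.1.le, ht.2.le⟩
      rw [(hπ t htI).deriv]
      have hht : h t < 0 := lt_trans (hanti hmI htI ht.1) hm0
      have hfv := hfpos _ (hmemI t htI)
      exact mul_neg_of_pos_of_neg (by positivity) hht
    exact lt_of_le_of_lt (min_le_right _ _) (hmono ⟨le_refl m, hmq.le⟩ ⟨hmq.le, le_refl q⟩ hmq)
end

section
/- Under the assumptions that F is an atomless CDF on [x_l, x_h] with strictly positive differentiable density, u is twice continuously differentiable, concave, strictly increasing with u' > 0, and π_F(·|x_D) is strictly quasiconcave, the unique maximizer m(x_D) of π_F(p | x_D) = u(x_D - p)F(2p) + u(p)(1 - F(2p)) satisfies: x_D < 2m(x_D) < μ_F if x_D < μ_F; x_D = 2m(x_D) = μ_F if x_D = μ_F; and x_D > 2m(x_D) > μ_F if x_D > μ_F, where μ_F is the median of F. -/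
/-!
The divider's payoff `P` is quasiconcave with its maximum at `m`, so it is monotone to the left
of `m` and antitone to the right; a point where `P' > 0` therefore lies left of `m`, and one where
`P' < 0` lies right of it. At `xD / 2` one has `P' = u' (xD / 2) (1 - 2 F xD)`, whose sign is that
of `μ - xD`; at `μ / 2` the sign of `P'` is that of `xD - μ`, because `u` is increasing and `u'`
is decreasing. When `xD = μ`, Jensen's inequality gives `P p < u (xD / 2) = P (xD / 2)` whenever
`2 p ≠ xD`.
-/

open Set

section Quasiconcave

variable {s : Set ℝ} {g : ℝ → ℝ} {m : ℝ}

theorem quasiconcaveOn_of_min_le (hs : Convex ℝ s)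
    (h : ∀ p ∈ s, ∀ q ∈ s, p < q → ∀ l ∈ Ioo (0 : ℝ) 1,
      min (g p) (g q) ≤ g (l * p + (1 - l) * q)) :
    QuasiconcaveOn ℝ s g := by
  refine fun r => (OrdConnected.convex ⟨fun x hx y hy z hz => ?_⟩)
  rcases eq_or_lt_of_le hz.1 with rfl | hxz
  · exact hx
  rcases eq_or_lt_of_le hz.2 with rfl | hzy
  · exact hy
  have hxy : x < y := hxz.trans hzy
  have hzs : z ∈ s := hs.ordConnected.out hx.1 hy.1 hz
  set l := (y - z) / (y - x)
  have hl : l ∈ Ioo (0 : ℝ) 1 :=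
    ⟨div_pos (by linarith) (by linarith), (div_lt_one (by linarith)).2 (by linarith)⟩
  have hlz : l * x + (1 - l) * y = z := by
    simp only [l]
    field_simp [(sub_pos.2 hxy).ne']
    ring
  exact ⟨hzs, (le_min hx.2 hy.2).trans (hlz ▸ h x hx.1 y hy.1 hxy l hl)⟩

theorem QuasiconcaveOn.le_of_mem_uIcc_of_isMaxOn (hg : QuasiconcaveOn ℝ s g)
    (hm : IsMaxOn g s m) (hms : m ∈ s) {x y : ℝ} (hy : y ∈ s) (hx : x ∈ uIcc m y) :
    g y ≤ g x :=
  ((hg (g y)).segment_subset ⟨hms, hm hy⟩ ⟨hy, le_rfl⟩ (segment_eq_uIcc m y ▸ hx)).2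

theorem QuasiconcaveOn.antitoneOn_of_isMaxOn (hg : QuasiconcaveOn ℝ s g)
    (hm : IsMaxOn g s m) (hms : m ∈ s) : AntitoneOn g (s ∩ Ici m) :=
  fun _ hx _ hy hxy => hg.le_of_mem_uIcc_of_isMaxOn hm hms hy.1 <| Icc_subset_uIcc ⟨hx.2, hxy⟩

theorem QuasiconcaveOn.monotoneOn_of_isMaxOn (hg : QuasiconcaveOn ℝ s g)
    (hm : IsMaxOn g s m) (hms : m ∈ s) : MonotoneOn g (s ∩ Iic m) :=
  fun _ hx _ hy hxy => hg.le_of_mem_uIcc_of_isMaxOn hm hms hx.1 <| Icc_subset_uIcc' ⟨hxy, hy.2⟩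

theorem QuasiconcaveOn.lt_of_isMaxOn_of_hasDerivAt_pos (hg : QuasiconcaveOn ℝ s g)
    (hm : IsMaxOn g s m) (hms : m ∈ s) {a b c : ℝ} (hab : a < b) (hs : Icc a b ⊆ s)
    (hd : HasDerivAt g c a) (hc : 0 < c) : a < m := by
  by_contra! hma
  have hanti : AntitoneOn g (Icc a b) :=
    (hg.antitoneOn_of_isMaxOn hm hms).mono fun x hx => ⟨hs hx, hma.trans hx.1⟩
  have hacc : AccPt a (Filter.principal (Icc a b)) :=
    uniqueDiffWithinAt_iff_accPt.1 (uniqueDiffOn_Icc hab a (left_mem_Icc.2 hab.le))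
  exact hc.not_ge (hd.hasDerivWithinAt.nonpos_of_antitoneOn hacc hanti)

theorem QuasiconcaveOn.lt_of_isMaxOn_of_hasDerivAt_neg (hg : QuasiconcaveOn ℝ s g)
    (hm : IsMaxOn g s m) (hms : m ∈ s) {a b c : ℝ} (hba : b < a) (hs : Icc b a ⊆ s)
    (hd : HasDerivAt g c a) (hc : c < 0) : m < a := by
  by_contra! ham
  have hmono : MonotoneOn g (Icc b a) :=
    (hg.monotoneOn_of_isMaxOn hm hms).mono fun x hx => ⟨hs hx, hx.2.trans ham⟩
  have hacc : AccPt a (Filter.principal (Icc b a)) :=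
    uniqueDiffWithinAt_iff_accPt.1 (uniqueDiffOn_Icc hba a (right_mem_Icc.2 hba.le))
  exact hc.not_ge (hd.hasDerivWithinAt.nonneg_of_monotoneOn hacc hmono)

end Quasiconcave

/-- The chooser sells at price `p`, leaving the divider `xD - p`, exactly when her valuation is
below `2 * p`. -/
def dividerPayoff (u F : ℝ → ℝ) (xD p : ℝ) : ℝ :=
  u (xD - p) * F (2 * p) + u p * (1 - F (2 * p))

section DividerPayoff

variable {u F : ℝ → ℝ} {xD : ℝ}

theorem dividerPayoff_half : dividerPayoff u F xD (xD / 2) = u (xD / 2) := by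
  rw [dividerPayoff, show xD - xD / 2 = xD / 2 by ring, show 2 * (xD / 2) = xD by ring]
  ring

theorem hasDerivAt_dividerPayoff (hu : Differentiable ℝ u) {p φ : ℝ}
    (hF : HasDerivAt F φ (2 * p)) :
    HasDerivAt (dividerPayoff u F xD)
      (deriv u p * (1 - F (2 * p)) - deriv u (xD - p) * F (2 * p)
        + 2 * φ * (u (xD - p) - u p)) p := by
  have hlin : HasDerivAt (fun q : ℝ => 2 * q) 2 p := by
    simpa using (hasDerivAt_id p).const_mul (2 : ℝ)
  have hFc : HasDerivAt (fun q => F (2 * q)) (φ * 2) p := hF.comp p hlin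
  have hu₁ : HasDerivAt (fun q => u (xD - q)) (deriv u (xD - p) * -1) p :=
    (hu _).hasDerivAt.comp p ((hasDerivAt_id p).const_sub xD)
  exact ((hu₁.fun_mul hFc).fun_add ((hu p).hasDerivAt.fun_mul (hFc.const_sub 1))).congr_deriv
    (by ring)

theorem hasDerivAt_dividerPayoff_half (hu : Differentiable ℝ u) {φ : ℝ}
    (hF : HasDerivAt F φ xD) :
    HasDerivAt (dividerPayoff u F xD) (deriv u (xD / 2) * (1 - 2 * F xD)) (xD / 2) := by
  have h2 : 2 * (xD / 2) = xD := by ring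
  convert hasDerivAt_dividerPayoff (xD := xD) hu (p := xD / 2) (h2.symm ▸ hF) using 1
  rw [h2, show xD - xD / 2 = xD / 2 by ring]
  ring

theorem hasDerivAt_dividerPayoff_of_eq_half (hu : Differentiable ℝ u) {μ φ : ℝ}
    (hF : HasDerivAt F φ μ) (hμ : F μ = 1 / 2) :
    HasDerivAt (dividerPayoff u F xD)
      ((deriv u (μ / 2) - deriv u (xD - μ / 2)) / 2
        + 2 * φ * (u (xD - μ / 2) - u (μ / 2))) (μ / 2) := by
  have h2 : 2 * (μ / 2) = μ := by ring
  convert hasDerivAt_dividerPayoff (xD := xD) hu (p := μ / 2) (h2.symm ▸ hF) using 1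
  rw [h2, hμ]
  ring

theorem dividerPayoff_lt_half (hu : ConcaveOn ℝ univ u) (hum : StrictMono u) {p : ℝ}
    (hF₀ : 0 ≤ F (2 * p)) (hF₁ : F (2 * p) ≤ 1) (hsign : 0 < (2 * p - xD) * (F (2 * p) - 1 / 2)) :
    dividerPayoff u F xD p < dividerPayoff u F xD (xD / 2) := by
  set t := F (2 * p)
  have hjensen : t * u (xD - p) + (1 - t) * u p ≤ u (t * (xD - p) + (1 - t) * p) :=
    hu.2 (mem_univ _) (mem_univ _) hF₀ (sub_nonneg.2 hF₁) (by ring)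
  calc dividerPayoff u F xD p = t * u (xD - p) + (1 - t) * u p := by rw [dividerPayoff]; ring
    _ ≤ u (t * (xD - p) + (1 - t) * p) := hjensen
    _ < u (xD / 2) := hum (by
        linarith [show t * (xD - p) + (1 - t) * p - xD / 2 = -((2 * p - xD) * (t - 1 / 2)) by ring])
    _ = dividerPayoff u F xD (xD / 2) := dividerPayoff_half.symm

theorem exists_hasDerivAt_dividerPayoff_neg_of_lt (hu : Differentiable ℝ u)
    (hanti : Antitone (deriv u)) (hum : StrictMono u) {μ φ : ℝ} (hF : HasDerivAt F φ μ)
    (hφ : 0 < φ) (hμ : F μ = 1 / 2) (h : xD < μ) :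
    ∃ c < 0, HasDerivAt (dividerPayoff u F xD) c (μ / 2) := by
  refine ⟨_, ?_, hasDerivAt_dividerPayoff_of_eq_half hu hF hμ⟩
  have hderiv := hanti (show xD - μ / 2 ≤ μ / 2 by linarith)
  have hutil := mul_neg_of_pos_of_neg (mul_pos two_pos hφ)
    (sub_neg.2 (hum (show xD - μ / 2 < μ / 2 by linarith)))
  linarith

theorem exists_hasDerivAt_dividerPayoff_pos_of_lt (hu : Differentiable ℝ u)
    (hanti : Antitone (deriv u)) (hum : StrictMono u) {μ φ : ℝ} (hF : HasDerivAt F φ μ)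
    (hφ : 0 < φ) (hμ : F μ = 1 / 2) (h : μ < xD) :
    ∃ c > 0, HasDerivAt (dividerPayoff u F xD) c (μ / 2) := by
  refine ⟨_, ?_, hasDerivAt_dividerPayoff_of_eq_half hu hF hμ⟩
  have hderiv := hanti (show μ / 2 ≤ xD - μ / 2 by linarith)
  have hutil := mul_pos (mul_pos two_pos hφ)
    (sub_pos.2 (hum (show μ / 2 < xD - μ / 2 by linarith)))
  linarith

theorem two_mul_eq_of_dividerPayoff_half_le (hu : ConcaveOn ℝ univ u) (hum : StrictMono u)
    {t : Set ℝ} (hFs : StrictMonoOn F t) (hxD : xD ∈ t) (hFD : F xD = 1 / 2) {m : ℝ}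
    (hm : 2 * m ∈ t) (hF₀ : 0 ≤ F (2 * m)) (hF₁ : F (2 * m) ≤ 1)
    (hmax : dividerPayoff u F xD (xD / 2) ≤ dividerPayoff u F xD m) : 2 * m = xD := by
  by_contra hne
  have hsign : 0 < (2 * m - xD) * (F (2 * m) - 1 / 2) := by
    rcases lt_or_gt_of_ne hne with hlt | hgt
    · exact mul_pos_of_neg_of_neg (by linarith) (by linarith [hFs hm hxD hlt])
    · exact mul_pos (by linarith) (by linarith [hFs hxD hm hgt])
  exact (dividerPayoff_lt_half hu hum hF₀ hF₁ hsign).not_ge hmax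

end DividerPayoff

theorem two_mul_mem_Icc_iff {a b p : ℝ} : 2 * p ∈ Icc a b ↔ p ∈ Icc (a / 2) (b / 2) := by
  simp only [mem_Icc]
  constructor <;> rintro ⟨h₁, h₂⟩ <;> constructor <;> linarith

theorem optimal_price_vs_median_general (xl xh : ℝ) (F f u : ℝ → ℝ)
    (hfpos : ∀ x ∈ Icc xl xh, 0 < f x)
    (hF : ∀ x ∈ Icc xl xh, HasDerivAt F (f x) x)
    (hF0 : F xl = 0) (hF1 : F xh = 1)
    (hu : ContDiff ℝ 2 u) (huconc : ConcaveOn ℝ univ u) (hum : StrictMono u)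
    (hu' : ∀ x, 0 < deriv u x)
    (xD : ℝ) (hxD : xD ∈ Icc xl xh)
    (hqc : ∀ p, 2 * p ∈ Icc xl xh → ∀ q, 2 * q ∈ Icc xl xh → p < q → ∀ l ∈ Ioo (0:ℝ) 1,
      min (u (xD - p) * F (2 * p) + u p * (1 - F (2 * p)))
          (u (xD - q) * F (2 * q) + u q * (1 - F (2 * q))) <
        u (xD - (l * p + (1 - l) * q)) * F (2 * (l * p + (1 - l) * q)) +
          u (l * p + (1 - l) * q) * (1 - F (2 * (l * p + (1 - l) * q))))
    (μ : ℝ) (hμmem : μ ∈ Icc xl xh) (hμ : F μ = 1/2)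
    (m : ℝ) (hmdom : 2 * m ∈ Icc xl xh)
    (hm : ∀ p, 2 * p ∈ Icc xl xh →
      u (xD - p) * F (2 * p) + u p * (1 - F (2 * p)) ≤
        u (xD - m) * F (2 * m) + u m * (1 - F (2 * m))) :
    (xD < μ → xD < 2 * m ∧ 2 * m < μ) ∧
    (xD = μ → 2 * m = μ) ∧
    (μ < xD → μ < 2 * m ∧ 2 * m < xD) := by
  have hud : Differentiable ℝ u := hu.differentiable (by norm_num)
  have hanti : Antitone (deriv u) := fun x y hxy =>
    huconc.antitoneOn_deriv (fun x _ => hud x) (mem_univ x) (mem_univ y) hxy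
  have hFs : StrictMonoOn F (Icc xl xh) :=
    strictMonoOn_of_hasDerivWithinAt_pos (convex_Icc _ _)
      (fun x hx => (hF x hx).continuousAt.continuousWithinAt)
      (fun x hx => (hF x (interior_subset hx)).hasDerivWithinAt)
      (fun x hx => hfpos x (interior_subset hx))
  have hms : m ∈ Icc (xl / 2) (xh / 2) := two_mul_mem_Icc_iff.1 hmdom
  have hmax : IsMaxOn (dividerPayoff u F xD) (Icc (xl / 2) (xh / 2)) m :=
    fun p hp => hm p (two_mul_mem_Icc_iff.2 hp)
  have hqcs : QuasiconcaveOn ℝ (Icc (xl / 2) (xh / 2)) (dividerPayoff u F xD) :=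
    quasiconcaveOn_of_min_le (convex_Icc _ _) fun p hp q hq hpq l hl =>
      (hqc p (two_mul_mem_Icc_iff.2 hp) q (two_mul_mem_Icc_iff.2 hq) hpq l hl).le
  have hdD := hasDerivAt_dividerPayoff_half (xD := xD) hud (hF xD hxD)
  have hfμ := hfpos μ hμmem
  obtain ⟨hxl, hxh⟩ := hxD
  obtain ⟨hμl, hμh⟩ := hμmem
  refine ⟨fun h => ⟨?_, ?_⟩, fun h => ?_, fun h => ⟨?_, ?_⟩⟩
  · have hFD : F xD < 1 / 2 := hμ ▸ hFs ⟨hxl, hxh⟩ ⟨hμl, hμh⟩ h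
    linarith [hqcs.lt_of_isMaxOn_of_hasDerivAt_pos hmax hms (b := μ / 2) (by linarith)
      (Icc_subset_Icc (by linarith) (by linarith)) hdD (mul_pos (hu' _) (by linarith))]
  · obtain ⟨c, hc, hdμ⟩ := exists_hasDerivAt_dividerPayoff_neg_of_lt hud hanti hum
      (hF μ ⟨hμl, hμh⟩) hfμ hμ h
    linarith [hqcs.lt_of_isMaxOn_of_hasDerivAt_neg hmax hms (b := xD / 2) (by linarith)
      (Icc_subset_Icc (by linarith) (by linarith)) hdμ hc]
  · have hF₀ : 0 ≤ F (2 * m) := hF0 ▸ hFs.monotoneOn ⟨le_rfl, by linarith⟩ hmdom hmdom.1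
    have hF₁ : F (2 * m) ≤ 1 := hF1 ▸ hFs.monotoneOn hmdom ⟨by linarith, le_rfl⟩ hmdom.2
    exact h ▸ two_mul_eq_of_dividerPayoff_half_le huconc hum hFs ⟨hxl, hxh⟩ (h ▸ hμ) hmdom hF₀ hF₁
      (hmax ⟨by linarith, by linarith⟩)
  · obtain ⟨c, hc, hdμ⟩ := exists_hasDerivAt_dividerPayoff_pos_of_lt hud hanti hum
      (hF μ ⟨hμl, hμh⟩) hfμ hμ h
    linarith [hqcs.lt_of_isMaxOn_of_hasDerivAt_pos hmax hms (b := xD / 2) (by linarith)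
      (Icc_subset_Icc (by linarith) (by linarith)) hdμ hc]
  · have hFD : 1 / 2 < F xD := hμ ▸ hFs ⟨hμl, hμh⟩ ⟨hxl, hxh⟩ h
    linarith [hqcs.lt_of_isMaxOn_of_hasDerivAt_neg hmax hms (b := xl / 2) (by linarith)
      (Icc_subset_Icc le_rfl (by linarith)) hdD (mul_neg_of_pos_of_neg (hu' _) (by linarith))]

/-- In the Bayesian Texas Shoot-Out, the unique maximizer `m` of the divider's
payoff satisfies `x_D < 2m < μ_F`, `x_D = 2m = μ_F`, or `x_D > 2m > μ_F` according to whether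
`x_D` is below, at, or above the median `μ_F` of `F`. -/
theorem optimal_price_vs_median (xl xh : ℝ) (hx : xl < xh) (F f u : ℝ → ℝ)
    (hfpos : ∀ x ∈ Icc xl xh, 0 < f x)
    (hfdiff : DifferentiableOn ℝ f (Icc xl xh))
    (hF : ∀ x ∈ Icc xl xh, HasDerivAt F (f x) x)
    (hF0 : F xl = 0) (hF1 : F xh = 1) (hFmono : MonotoneOn F (Icc xl xh))
    (hu : ContDiff ℝ 2 u) (huconc : ConcaveOn ℝ univ u) (hum : StrictMono u)
    (hu' : ∀ x, 0 < deriv u x)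
    (xD : ℝ) (hxD : xD ∈ Icc xl xh)
    (hqc : ∀ p, 2 * p ∈ Icc xl xh → ∀ q, 2 * q ∈ Icc xl xh → p < q → ∀ l ∈ Ioo (0:ℝ) 1,
      min (u (xD - p) * F (2 * p) + u p * (1 - F (2 * p)))
          (u (xD - q) * F (2 * q) + u q * (1 - F (2 * q))) <
        u (xD - (l * p + (1 - l) * q)) * F (2 * (l * p + (1 - l) * q)) +
          u (l * p + (1 - l) * q) * (1 - F (2 * (l * p + (1 - l) * q))))
    (μ : ℝ) (hμmem : μ ∈ Icc xl xh) (hμ : F μ = 1/2)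
    (m : ℝ) (hmdom : 2 * m ∈ Icc xl xh)
    (hm : ∀ p, 2 * p ∈ Icc xl xh →
      u (xD - p) * F (2 * p) + u p * (1 - F (2 * p)) ≤
        u (xD - m) * F (2 * m) + u m * (1 - F (2 * m))) :
    (xD < μ → xD < 2 * m ∧ 2 * m < μ) ∧
    (xD = μ → 2 * m = μ) ∧
    (μ < xD → μ < 2 * m ∧ 2 * m < xD) :=
  optimal_price_vs_median_general xl xh F f u hfpos hF hF0 hF1 hu huconc hum hu' xD hxD hqc μ hμmem
    hμ m hmdom hm
end

section
/- Under the same assumptions (F atomless with positive differentiable density, u twice continuously differentiable, concave, strictly increasing with u' > 0, strict quasiconcavity of π_F(·|x_D)), the optimal price announcement m(x_D) = argmax_p [u(x_D - p)F(2p) + u(p)(1 - F(2p))] is strictly increasing in x_D. -/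
open Set

/-- Under the assumptions of the Bayesian Texas Shoot-Out (atomless `F` with
positive differentiable density, `u` C², concave, strictly increasing with `u' > 0`, strict
quasiconcavity of the payoff), the optimal price announcement `m(x_D)` is strictly increasing. -/
theorem optimal_price_strictMono (xl xh : ℝ) (hx : xl < xh) (F f u : ℝ → ℝ)
    (hfpos : ∀ x ∈ Icc xl xh, 0 < f x)
    (hfdiff : DifferentiableOn ℝ f (Icc xl xh))
    (hF : ∀ x ∈ Icc xl xh, HasDerivAt F (f x) x)
    (hF0 : F xl = 0) (hF1 : F xh = 1) (hFmono : MonotoneOn F (Icc xl xh))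
    (hu : ContDiff ℝ 2 u) (huconc : ConcaveOn ℝ univ u) (hum : StrictMono u)
    (hu' : ∀ x, 0 < deriv u x)
    (hqc : ∀ xD ∈ Icc xl xh,
      ∀ p, 2 * p ∈ Icc xl xh → ∀ q, 2 * q ∈ Icc xl xh → p < q → ∀ l ∈ Ioo (0:ℝ) 1,
      min (u (xD - p) * F (2 * p) + u p * (1 - F (2 * p)))
          (u (xD - q) * F (2 * q) + u q * (1 - F (2 * q))) <
        u (xD - (l * p + (1 - l) * q)) * F (2 * (l * p + (1 - l) * q)) +
          u (l * p + (1 - l) * q) * (1 - F (2 * (l * p + (1 - l) * q))))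
    (m : ℝ → ℝ)
    (hmdom : ∀ xD ∈ Icc xl xh, 2 * m xD ∈ Icc xl xh)
    (hm : ∀ xD ∈ Icc xl xh, ∀ p, 2 * p ∈ Icc xl xh →
      u (xD - p) * F (2 * p) + u p * (1 - F (2 * p)) ≤
        u (xD - m xD) * F (2 * m xD) + u (m xD) * (1 - F (2 * m xD))) :
    StrictMonoOn m (Icc xl xh) := by
  have hudiff : Differentiable ℝ u := hu.differentiable (by norm_num)
  have hud : ∀ y : ℝ, HasDerivAt u (deriv u y) y := fun y => (hudiff y).hasDerivAt
  have hu'anti : Antitone (deriv u) := by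
    intro s t hst
    exact huconc.antitoneOn_deriv (fun z _ => hudiff z) (mem_univ s) (mem_univ t) hst
  -- derivative of the payoff in p
  have hD : ∀ x p : ℝ, 2 * p ∈ Icc xl xh →
      HasDerivAt (fun q => u (x - q) * F (2 * q) + u q * (1 - F (2 * q)))
        (2 * f (2 * p) * (u (x - p) - u p) - deriv u (x - p) * F (2 * p)
          + deriv u p * (1 - F (2 * p))) p := by
    intro x p hp
    have h2q : HasDerivAt (fun q : ℝ => 2 * q) 2 p := by
      simpa using (hasDerivAt_id p).const_mul (2 : ℝ)
    have hFq : HasDerivAt (fun q => F (2 * q)) (f (2 * p) * 2) p := (hF _ hp).comp p h2q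
    have hxq : HasDerivAt (fun q : ℝ => x - q) (-1) p := by
      simpa using (hasDerivAt_id p).const_sub x
    have huxq : HasDerivAt (fun q => u (x - q)) (deriv u (x - p) * (-1)) p :=
      (hud (x - p)).comp p hxq
    have h1 : HasDerivAt (fun q => u (x - q) * F (2 * q))
        (deriv u (x - p) * (-1) * F (2 * p) + u (x - p) * (f (2 * p) * 2)) p := huxq.mul hFq
    have h2 : HasDerivAt (fun q => u q * (1 - F (2 * q)))
        (deriv u p * (1 - F (2 * p)) + u p * (0 - f (2 * p) * 2)) p :=
      (hud p).mul ((hasDerivAt_const p (1 : ℝ)).sub hFq)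
    have h3 : HasDerivAt (fun q => u (x - q) * F (2 * q) + u q * (1 - F (2 * q))) _ p :=
      h1.add h2
    convert h3 using 1
    ring
  have hFs : StrictMonoOn F (Icc xl xh) := by
    apply strictMonoOn_of_deriv_pos (convex_Icc xl xh)
    · exact fun z hz => (hF z hz).continuousAt.continuousWithinAt
    · intro z hz
      rw [interior_Icc] at hz
      rw [(hF z (Ioo_subset_Icc_self hz)).deriv]
      exact hfpos z (Ioo_subset_Icc_self hz)
  have hF0' : ∀ y ∈ Icc xl xh, 0 ≤ F y := fun y hy =>
    hF0 ▸ hFmono ⟨le_rfl, hx.le⟩ hy hy.1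
  have hSsub : ∀ q ∈ Icc (xl / 2) (xh / 2), 2 * q ∈ Icc xl xh := by
    intro q hq
    exact ⟨by linarith [hq.1], by linarith [hq.2]⟩
  -- the maximizer is interior
  have hint : ∀ x ∈ Icc xl xh, xl < 2 * m x ∧ 2 * m x < xh := by
    intro x hxm
    have hp := hmdom x hxm
    have hmaxOn : IsLocalMaxOn (fun q => u (x - q) * F (2 * q) + u q * (1 - F (2 * q)))
        (Icc (xl / 2) (xh / 2)) (m x) :=
      eventually_nhdsWithin_of_forall fun q hq => hm x hxm q (hSsub q hq)
    have hfd := ((hD x (m x) hp).hasFDerivAt).hasFDerivWithinAt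
      (s := Icc (xl / 2) (xh / 2))
    have hmem : m x ∈ Icc (xl / 2) (xh / 2) := ⟨by linarith [hp.1], by linarith [hp.2]⟩
    constructor
    · by_contra hcon
      have h2p : 2 * m x = xl := le_antisymm (not_lt.1 hcon) hp.1
      have hy : (xh / 2 - m x) ∈ posTangentConeAt (Icc (xl / 2) (xh / 2)) (m x) :=
        sub_mem_posTangentConeAt_of_segment_subset
          ((convex_Icc _ _).segment_subset hmem ⟨by linarith [hmem.1], le_rfl⟩)
      have hle := hmaxOn.hasFDerivWithinAt_nonpos hfd hy
      simp only [ContinuousLinearMap.smulRight_apply, ContinuousLinearMap.one_apply,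
        ContinuousLinearMap.toSpanSingleton_apply, smul_eq_mul] at hle
      have hFp : F (2 * m x) = 0 := by rw [h2p]; exact hF0
      have huu : u (m x) ≤ u (x - m x) := hum.monotone (by linarith [hxm.1])
      have hfp : 0 < f (2 * m x) := hfpos _ hp
      have hup : 0 < deriv u (m x) := hu' _
      rw [hFp] at hle
      have hgt : 0 < xh / 2 - m x := by linarith
      have hDpos : 0 < 2 * f (2 * m x) * (u (x - m x) - u (m x)) -
          deriv u (x - m x) * 0 + deriv u (m x) * (1 - 0) := by
        nlinarith [mul_nonneg hfp.le (sub_nonneg.2 huu)]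
      nlinarith [mul_pos hgt hDpos]
    · by_contra hcon
      have h2p : 2 * m x = xh := le_antisymm hp.2 (not_lt.1 hcon)
      have hy : (xl / 2 - m x) ∈ posTangentConeAt (Icc (xl / 2) (xh / 2)) (m x) :=
        sub_mem_posTangentConeAt_of_segment_subset
          ((convex_Icc _ _).segment_subset hmem ⟨le_rfl, by linarith [hmem.2]⟩)
      have hle := hmaxOn.hasFDerivWithinAt_nonpos hfd hy
      simp only [ContinuousLinearMap.smulRight_apply, ContinuousLinearMap.one_apply,
        ContinuousLinearMap.toSpanSingleton_apply, smul_eq_mul] at hle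
      have hFp : F (2 * m x) = 1 := by rw [h2p]; exact hF1
      have huu : u (x - m x) ≤ u (m x) := hum.monotone (by linarith [hxm.2])
      have hfp : 0 < f (2 * m x) := hfpos _ hp
      have hup : 0 < deriv u (x - m x) := hu' _
      rw [hFp] at hle
      have hgt : xl / 2 - m x < 0 := by linarith
      have hDneg : 2 * f (2 * m x) * (u (x - m x) - u (m x)) -
          deriv u (x - m x) * 1 + deriv u (m x) * (1 - 1) < 0 := by
        nlinarith [mul_nonpos_of_nonneg_of_nonpos hfp.le (sub_nonpos.2 huu)]
      nlinarith [mul_pos_of_neg_of_neg hgt hDneg]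
  -- increments of u are antitone in the base point
  have hincr : ∀ d : ℝ, 0 ≤ d → ∀ s t : ℝ, s ≤ t → u (t + d) - u t ≤ u (s + d) - u s := by
    intro d hd s t hst
    have hw : ∀ y : ℝ, HasDerivAt (fun y => u (y + d) - u y) (deriv u (y + d) - deriv u y) y := by
      intro y
      have h1 : HasDerivAt (fun y => u (y + d)) (deriv u (y + d) * 1) y :=
        (hud (y + d)).comp y ((hasDerivAt_id y).add_const d)
      have h := h1.sub (hud y)
      simp only [mul_one] at h
      exact h
    have hanti : Antitone fun y => u (y + d) - u y := by
      apply antitone_of_deriv_nonpos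
      · exact fun y => (hw y).differentiableAt
      · intro y
        rw [(hw y).deriv]
        have := hu'anti (by linarith : y ≤ y + d)
        linarith
    exact hanti hst
  -- main argument
  intro a ha b hb hab
  by_contra hcon
  push_neg at hcon
  rcases eq_or_lt_of_le hcon with heq | hlt
  · -- equal maximizers: first-order conditions contradict
    have hia := hint a ha
    have hib := hint b hb
    set p := m a with hpdef
    have hpa := hmdom a ha
    have hmemI : p ∈ Ioo (xl / 2) (xh / 2) := ⟨by linarith [hia.1], by linarith [hia.2]⟩
    have hnb : Icc (xl / 2) (xh / 2) ∈ nhds p := Icc_mem_nhds hmemI.1 hmemI.2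
    have hmaxa : IsLocalMax (fun q => u (a - q) * F (2 * q) + u q * (1 - F (2 * q))) p :=
      Filter.eventually_of_mem hnb fun q hq => hm a ha q (hSsub q hq)
    have hmaxb : IsLocalMax (fun q => u (b - q) * F (2 * q) + u q * (1 - F (2 * q))) p := by
      refine Filter.eventually_of_mem hnb fun q hq => ?_
      have := hm b hb q (hSsub q hq)
      rw [heq] at this
      exact this
    have hza := hmaxa.hasDerivAt_eq_zero (hD a p hpa)
    have hzb := hmaxb.hasDerivAt_eq_zero (heq ▸ hD b (m b) (hmdom b hb))
    have hfp : 0 < f (2 * p) := hfpos _ hpa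
    have huab : u (a - p) < u (b - p) := hum (by linarith)
    have hu'ab : deriv u (b - p) ≤ deriv u (a - p) := hu'anti (by linarith)
    have hFp : 0 ≤ F (2 * p) := hF0' _ hpa
    nlinarith [hza, hzb, mul_nonneg hFp (sub_nonneg.2 hu'ab),
      mul_pos hfp (sub_pos.2 huab)]
  · -- m b < m a : revealed preference contradiction
    have h1 := hm a ha (m b) (hmdom b hb)
    have h2 := hm b hb (m a) (hmdom a ha)
    have hFba : F (2 * m b) < F (2 * m a) :=
      hFs (hmdom b hb) (hmdom a ha) (by linarith)
    have hFb0 : 0 ≤ F (2 * m b) := hF0' _ (hmdom b hb)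
    have hDb : 0 < u (b - m b) - u (a - m b) := sub_pos.2 (hum (by linarith))
    have hDab : u (b - m b) - u (a - m b) ≤ u (b - m a) - u (a - m a) := by
      have h := hincr (b - a) (by linarith) (a - m a) (a - m b) (by linarith)
      have e1 : a - m a + (b - a) = b - m a := by ring
      have e2 : a - m b + (b - a) = b - m b := by ring
      rw [e1, e2] at h
      linarith
    nlinarith [h1, h2, mul_le_mul_of_nonneg_right hDab (le_of_lt (lt_of_le_of_lt hFb0 hFba))]
end
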